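/- arXiv:2510.27099 — 6 statements merged into one kernel-verified Lean document; each statement's English description precedes it below -/
import Mathlib

section
/- Define w(x,t) as the Hopf–Lax-type value w(x,t) = inf_{τ∈[0,t), y∈ℝⁿ} [(t−τ)·L̄((x−y)/(t−τ)) + f(y,τ)]. Suppose t > 0, x ∈ ℝⁿ, and w(x,t) < b̄(x). If (τ_k, y_k) are minimizing sequences with (t−τ_k)·L̄((x−y_k)/(t−τ_k)) + f(y_k,τ_k) ≤ w(x,t) + 1/k, then τ_k does not converge to t; i.e., there exist ε₀ > 0 and τ₀ ∈ (0,t) such that τ_k ≤ τ₀ for all k with 1/k < ε₀. -/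
open NNReal

theorem stmt_3 (n : ℕ) (Lbar : EuclideanSpace ℝ (Fin n) → ℝ) (K₀ : ℝ) (hK₀ : 0 < K₀)
    (hLc : Continuous Lbar) (hLconv : ConvexOn ℝ Set.univ Lbar)
    (hLb : ∀ v, ‖v‖ ^ 2 / 2 - K₀ ≤ Lbar v ∧ Lbar v ≤ ‖v‖ ^ 2 / 2 + K₀)
    (g bbar : EuclideanSpace ℝ (Fin n) → ℝ)
    (Lg : ℝ≥0) (hglip : LipschitzWith Lg g)
    (hgbd : ∃ M, ∀ x, |g x| ≤ M) (hbbd : ∃ M, ∀ x, |bbar x| ≤ M)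
    (hbuc : UniformContinuous bbar)
    (hgb : ∀ x, g x ≤ bbar x)
    (f : EuclideanSpace ℝ (Fin n) → ℝ → ℝ)
    (hf0 : ∀ y, f y 0 = g y) (hfp : ∀ y τ, 0 < τ → f y τ = bbar y)
    (w : EuclideanSpace ℝ (Fin n) → ℝ → ℝ)
    (hw0 : ∀ x, w x 0 = g x)
    (hw : ∀ x t, 0 < t → w x t =
      sInf {r | ∃ (τ : ℝ) (y : EuclideanSpace ℝ (Fin n)), 0 ≤ τ ∧ τ < t ∧
        r = (t - τ) * Lbar ((t - τ)⁻¹ • (x - y)) + f y τ})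
    (x : EuclideanSpace ℝ (Fin n)) (t : ℝ) (ht : 0 < t)
    (hwlt : w x t < bbar x)
    (τk : ℕ → ℝ) (yk : ℕ → EuclideanSpace ℝ (Fin n))
    (hmin : ∀ k : ℕ, 0 < k → 0 ≤ τk k ∧ τk k < t ∧
      (t - τk k) * Lbar ((t - τk k)⁻¹ • (x - yk k)) + f (yk k) (τk k) ≤ w x t + 1 / k) :
    ∃ ε₀ > 0, ∃ τ₀ : ℝ, 0 < τ₀ ∧ τ₀ < t ∧
      ∀ k : ℕ, 0 < k → 1 / (k : ℝ) < ε₀ → τk k ≤ τ₀ := by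
  obtain ⟨M, hM⟩ := hbbd
  have hM0 : 0 ≤ M := le_trans (abs_nonneg _) (hM x)
  set ε := bbar x - w x t with hε
  have hεpos : 0 < ε := by simp only [hε]; linarith
  obtain ⟨δ, hδ0, hδ⟩ := Metric.uniformContinuous_iff.mp hbuc (ε/4) (by linarith)
  set C : ℝ := |bbar x| + K₀ * t + M + 1 with hC
  have hC0 : 0 < C := by positivity
  set s : ℝ := min (t/2) (min (ε/(8*K₀)) (δ^2/(2*C))) with hs
  have hs0 : 0 < s := by
    apply lt_min (by linarith)
    exact lt_min (by positivity) (by positivity)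
  have hst : s ≤ t/2 := min_le_left _ _
  have hsε : s ≤ ε/(8*K₀) := le_trans (min_le_right _ _) (min_le_left _ _)
  have hsδ : s ≤ δ^2/(2*C) := le_trans (min_le_right _ _) (min_le_right _ _)
  refine ⟨ε/2, by linarith, t - s, by linarith, by linarith, ?_⟩
  intro k hk hk2
  by_contra h
  push_neg at h
  obtain ⟨hτ0, hτt, hmin'⟩ := hmin k hk
  set τ := τk k with hτdef
  set y := yk k with hydef
  have hτpos : 0 < τ := by linarith
  have hs'0 : 0 < t - τ := by linarith
  have hs's : t - τ < s := by linarith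
  rw [hfp y τ hτpos] at hmin'
  set d : ℝ := ‖x - y‖ with hd
  have hd0 : 0 ≤ d := norm_nonneg _
  have hnorm : ‖(t-τ)⁻¹ • (x - y)‖ = (t-τ)⁻¹ * d := by
    rw [norm_smul, Real.norm_eq_abs, abs_of_pos (by positivity)]
  have hL := (hLb ((t-τ)⁻¹ • (x - y))).1
  rw [hnorm] at hL
  have hkey : d^2/(2*(t-τ)) - K₀*(t-τ) ≤ (t-τ) * Lbar ((t-τ)⁻¹ • (x - y)) := by
    have h2 := mul_le_mul_of_nonneg_left hL hs'0.le
    have heq : (t-τ) * (((t-τ)⁻¹ * d)^2/2 - K₀) = d^2/(2*(t-τ)) - K₀*(t-τ) := by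
      field_simp
    linarith [heq ▸ h2]
  have hmain : d^2/(2*(t-τ)) - K₀*(t-τ) + bbar y ≤ w x t + 1/k := by linarith
  by_cases hcase : d < δ
  · have hdy : dist y x < δ := by
      rw [dist_eq_norm, norm_sub_rev]; exact hcase
    have hby : |bbar y - bbar x| < ε/4 := by
      have := hδ hdy
      rwa [Real.dist_eq] at this
    have hby' : bbar x - ε/4 < bbar y := by
      have := (abs_lt.mp hby).1; linarith
    have h8 : K₀ * (t - τ) ≤ ε/8 := by
      have hss' : t - τ ≤ ε/(8*K₀) := by linarith
      rw [le_div_iff₀ (by positivity)] at hss'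
      have hr : (t-τ)*(8*K₀) = 8*(K₀*(t-τ)) := by ring
      linarith
    have hpos : 0 ≤ d^2/(2*(t-τ)) := by positivity
    have hwε : w x t = bbar x - ε := by simp [hε]
    rw [hwε] at hmain
    linarith
  · push_neg at hcase
    have h1 : δ^2 ≤ d^2 := by nlinarith
    have hssδ : t - τ ≤ δ^2/(2*C) := by linarith
    rw [le_div_iff₀ (by positivity)] at hssδ
    have h2 : C ≤ δ^2/(2*(t-τ)) := by
      rw [le_div_iff₀ (by positivity)]
      calc C * (2*(t-τ)) = (t-τ)*(2*C) := by ring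
        _ ≤ δ^2 := hssδ
    have h3 : δ^2/(2*(t-τ)) ≤ d^2/(2*(t-τ)) := by gcongr
    have h4 : K₀ * (t - τ) ≤ K₀ * t := by
      have := mul_le_mul_of_nonneg_left (show t - τ ≤ t by linarith) hK₀.le
      linarith
    have h5 : -M ≤ bbar y := by have := (abs_le.mp (hM y)).1; linarith
    have h6 : bbar x ≤ |bbar x| := le_abs_self _
    have hwε : w x t = bbar x - ε := by simp [hε]
    rw [hwε] at hmain
    simp only [hC] at h2
    linarith
end

section
/- With w(x,t) = inf_{τ∈[0,t), y∈ℝⁿ} [(t−τ)·L̄((x−y)/(t−τ)) + f(y,τ)], suppose w(x,t) < b̄(x) and (τ_ε, y_ε) is an ε-minimizer for small ε. Then there exist constants τ_{x,t} ∈ (0,t) and C_{x,t} > 0 such that τ_ε ≤ τ_{x,t} and |x − y_ε| ≤ C_{x,t}·(t − τ_ε) for all sufficiently small ε > 0. -/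
open NNReal

set_option maxHeartbeats 1000000 in
theorem stmt_4 (n : ℕ) (Lbar : EuclideanSpace ℝ (Fin n) → ℝ) (K₀ : ℝ) (hK₀ : 0 < K₀)
    (hLc : Continuous Lbar) (hLconv : ConvexOn ℝ Set.univ Lbar)
    (hLb : ∀ v, ‖v‖ ^ 2 / 2 - K₀ ≤ Lbar v ∧ Lbar v ≤ ‖v‖ ^ 2 / 2 + K₀)
    (g bbar : EuclideanSpace ℝ (Fin n) → ℝ)
    (Lg : ℝ≥0) (hglip : LipschitzWith Lg g)
    (hgbd : ∃ M, ∀ x, |g x| ≤ M) (hbbd : ∃ M, ∀ x, |bbar x| ≤ M)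
    (hbuc : UniformContinuous bbar)
    (hgb : ∀ x, g x ≤ bbar x)
    (f : EuclideanSpace ℝ (Fin n) → ℝ → ℝ)
    (hf0 : ∀ y, f y 0 = g y) (hfp : ∀ y τ, 0 < τ → f y τ = bbar y)
    (w : EuclideanSpace ℝ (Fin n) → ℝ → ℝ)
    (hw0 : ∀ x, w x 0 = g x)
    (hw : ∀ x t, 0 < t → w x t =
      sInf {r | ∃ (τ : ℝ) (y : EuclideanSpace ℝ (Fin n)), 0 ≤ τ ∧ τ < t ∧
        r = (t - τ) * Lbar ((t - τ)⁻¹ • (x - y)) + f y τ})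
    (x : EuclideanSpace ℝ (Fin n)) (t : ℝ) (ht : 0 < t)
    (hwlt : w x t < bbar x)
    (τe : ℝ → ℝ) (ye : ℝ → EuclideanSpace ℝ (Fin n))
    (hmin : ∀ ε : ℝ, 0 < ε → 0 ≤ τe ε ∧ τe ε < t ∧
      (t - τe ε) * Lbar ((t - τe ε)⁻¹ • (x - ye ε)) + f (ye ε) (τe ε) ≤ w x t + ε) :
    ∃ ε₀ > 0, ∃ τxt : ℝ, 0 < τxt ∧ τxt < t ∧ ∃ Cxt > 0,
      ∀ ε : ℝ, 0 < ε → ε < ε₀ →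
        τe ε ≤ τxt ∧ ‖x - ye ε‖ ≤ Cxt * (t - τe ε) := by

  obtain ⟨Mg, hMg⟩ := hgbd
  obtain ⟨Mb, hMb⟩ := hbbd
  set M := max Mg Mb with hMdef
  have hM0 : 0 ≤ M := le_trans (abs_nonneg _) (le_trans (hMg x) (le_max_left _ _))
  have hfM : ∀ y τ, 0 ≤ τ → -M ≤ f y τ := by
    intro y τ hτ
    rcases eq_or_lt_of_le hτ with h | h
    · rw [← h, hf0]
      have h1 := (abs_le.mp (hMg y)).1
      have h2 := le_max_left Mg Mb
      linarith
    · rw [hfp y τ h]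
      have h1 := (abs_le.mp (hMb y)).1
      have h2 := le_max_right Mg Mb
      linarith
  set δ := bbar x - w x t with hδdef
  have hδ : 0 < δ := by simp only [hδdef]; linarith
  set A := |w x t| + δ + K₀ * t + M + 1 with hAdef
  have hA0 : 0 < A := by
    have := abs_nonneg (w x t)
    nlinarith [mul_pos hK₀ ht]
  obtain ⟨η, hη0, hη⟩ := Metric.uniformContinuous_iff.mp hbuc (δ / 4) (by linarith)
  set σ := min (t / 2) (min (η ^ 2 / (2 * A)) (δ / (4 * K₀))) with hσdef
  have hσ0 : 0 < σ := lt_min (by linarith) (lt_min (by positivity) (by positivity))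
  have hσt : σ ≤ t / 2 := min_le_left _ _
  have hσ1 : σ ≤ η ^ 2 / (2 * A) := le_trans (min_le_right _ _) (min_le_left _ _)
  have hσ2 : σ ≤ δ / (4 * K₀) := le_trans (min_le_right _ _) (min_le_right _ _)
  have hσ1' : 2 * A * σ ≤ η ^ 2 := by
    have := (le_div_iff₀ (by positivity : (0:ℝ) < 2 * A)).mp hσ1
    linarith
  have hσ2' : 4 * K₀ * σ ≤ δ := by
    have := (le_div_iff₀ (by positivity : (0:ℝ) < 4 * K₀)).mp hσ2
    linarith
  refine ⟨δ / 4, by linarith, t - σ, by linarith, by linarith,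
    Real.sqrt (2 * A / σ), Real.sqrt_pos.mpr (by positivity), ?_⟩
  intro ε hε hεδ
  obtain ⟨hτ0, hτt, hle⟩ := hmin ε hε
  set s := t - τe ε with hsdef
  have hs : 0 < s := by simp only [hsdef]; linarith
  have hst : s ≤ t := by simp only [hsdef]; linarith
  set d := ‖x - ye ε‖ with hddef
  have hd0 : 0 ≤ d := norm_nonneg _
  have hv : ‖(t - τe ε)⁻¹ • (x - ye ε)‖ = d / s := by
    rw [norm_smul, Real.norm_eq_abs, abs_inv]
    rw [abs_of_pos (show (0:ℝ) < t - τe ε by linarith)]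
    rw [← hsdef, ← hddef]
    ring
  have hLlow := (hLb ((t - τe ε)⁻¹ • (x - ye ε))).1
  rw [hv] at hLlow
  have hfM' := hfM (ye ε) (τe ε) hτ0
  have hkey : d ^ 2 / (2 * s) ≤ w x t + ε + K₀ * s + M := by
    have h1 : s * ((d / s) ^ 2 / 2 - K₀) + f (ye ε) (τe ε) ≤ w x t + ε := by
      have h2 : s * ((d / s) ^ 2 / 2 - K₀) ≤ s * Lbar ((t - τe ε)⁻¹ • (x - ye ε)) :=
        mul_le_mul_of_nonneg_left hLlow hs.le
      calc s * ((d / s) ^ 2 / 2 - K₀) + f (ye ε) (τe ε)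
          ≤ s * Lbar ((t - τe ε)⁻¹ • (x - ye ε)) + f (ye ε) (τe ε) := by linarith
        _ ≤ w x t + ε := hle
    have h2 : s * ((d / s) ^ 2 / 2 - K₀) = d ^ 2 / (2 * s) - K₀ * s := by
      field_simp
    linarith
  have hkey2 : d ^ 2 ≤ 2 * A * s := by
    have hAbig : w x t + ε + K₀ * s + M ≤ A := by
      have h1 : w x t ≤ |w x t| := le_abs_self _
      have h2 : K₀ * s ≤ K₀ * t := mul_le_mul_of_nonneg_left hst hK₀.le
      simp only [hAdef]
      linarith
    have h3 : d ^ 2 / (2 * s) ≤ A := le_trans hkey hAbig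
    have h4 := (div_le_iff₀ (by positivity : (0:ℝ) < 2 * s)).mp h3
    linarith
  have hτb : τe ε ≤ t - σ := by
    by_contra hcon
    push_neg at hcon
    have hsσ : s < σ := by simp only [hsdef]; linarith
    have hτpos : 0 < τe ε := by linarith
    have hfb : f (ye ε) (τe ε) = bbar (ye ε) := hfp _ _ hτpos
    have hd2 : d ^ 2 < η ^ 2 := by nlinarith
    have hdη : d < η := by nlinarith
    have hdist : dist (ye ε) x < η := by
      rw [dist_eq_norm, norm_sub_rev, ← hddef]
      exact hdη
    have hbb : |bbar (ye ε) - bbar x| < δ / 4 := by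
      have := hη hdist
      rwa [Real.dist_eq] at this
    have hbb' : bbar x - δ / 4 < bbar (ye ε) := by
      have := (abs_lt.mp hbb).1
      linarith
    have hL2 : -(K₀ * s) ≤ s * Lbar ((t - τe ε)⁻¹ • (x - ye ε)) := by
      have h2 : s * ((d / s) ^ 2 / 2 - K₀) ≤ s * Lbar ((t - τe ε)⁻¹ • (x - ye ε)) :=
        mul_le_mul_of_nonneg_left hLlow hs.le
      nlinarith [sq_nonneg (d / s)]
    rw [hfb] at hle
    have hKs : K₀ * s ≤ δ / 4 := by nlinarith
    have : bbar x - δ / 2 ≤ w x t + ε := by linarith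
    simp only [hδdef] at hεδ
    linarith
  refine ⟨hτb, ?_⟩
  have hsσ : σ ≤ s := by simp only [hsdef]; linarith
  have hd2 : d ^ 2 ≤ (2 * A / σ) * s ^ 2 := by
    calc d ^ 2 ≤ 2 * A * s := hkey2
      _ = (2 * A / s) * s ^ 2 := by field_simp
      _ ≤ (2 * A / σ) * s ^ 2 := by
          have : 2 * A / s ≤ 2 * A / σ := by
            apply div_le_div_of_nonneg_left (by positivity) hσ0 hsσ
          nlinarith [sq_nonneg s]
  calc d = Real.sqrt (d ^ 2) := (Real.sqrt_sq hd0).symm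
    _ ≤ Real.sqrt ((2 * A / σ) * s ^ 2) := Real.sqrt_le_sqrt hd2
    _ = Real.sqrt (2 * A / σ) * s := by
        rw [Real.sqrt_mul (by positivity), Real.sqrt_sq hs.le]
end

section
/- With w(x,t) = inf_{τ∈[0,t), y∈ℝⁿ} [(t−τ)·L̄((x−y)/(t−τ)) + f(y,τ)] for t > 0 and w(x,0) = g(x), the following Dynamic Programming Principle holds for every 0 < s < t and x ∈ ℝⁿ: w(x,t) equals the infimum over τ ∈ [0,t) and y ∈ ℝⁿ of (t − max(τ,s))·L̄((x−y)/(t − max(τ,s))) + [w(y,s) if s > τ, f(y,τ) if s ≤ τ]. -/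
/-!
The value `w(x, t)` is an infimum over straight paths ending at `(x, t)`. A straight path from
`(y, τ)` with `τ < s` can be cut at time `s`, its two pieces costing exactly as much as the whole;
conversely, two consecutive straight paths through `(y, s)` cost at least as much as the direct one,
because the perspective `(a, z) ↦ a L̄(z / a)` of the convex function `L̄` is subadditive.
-/

open NNReal Set

section HopfLax

variable {E : Type*} [AddCommGroup E] [Module ℝ E]

/-- The cost of moving by `z` in time `a` at constant velocity. -/
noncomputable def perspective (L : E → ℝ) (a : ℝ) (z : E) : ℝ := a * L (a⁻¹ • z)

theorem perspective_smul (L : E → ℝ) {a : ℝ} (ha : a ≠ 0) (v : E) :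
    perspective L a (a • v) = a * L v := by
  rw [perspective, smul_smul, inv_mul_cancel₀ ha, one_smul]

theorem ConvexOn.perspective_add_le {L : E → ℝ} (hL : ConvexOn ℝ univ L) {a b : ℝ}
    (ha : 0 < a) (hb : 0 < b) (z₁ z₂ : E) :
    perspective L (a + b) (z₁ + z₂) ≤ perspective L a z₁ + perspective L b z₂ := by
  have hab : 0 < a + b := add_pos ha hb
  have hconv := hL.2 (mem_univ (a⁻¹ • z₁)) (mem_univ (b⁻¹ • z₂))
    (div_pos ha hab).le (div_pos hb hab).le (by field_simp)
  have hmid : (a / (a + b)) • a⁻¹ • z₁ + (b / (a + b)) • b⁻¹ • z₂ = (a + b)⁻¹ • (z₁ + z₂) := by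
    simp only [smul_smul, smul_add]
    congr 2 <;> field_simp
  rw [hmid, smul_eq_mul, smul_eq_mul] at hconv
  calc perspective L (a + b) (z₁ + z₂)
      ≤ (a + b) * (a / (a + b) * L (a⁻¹ • z₁) + b / (a + b) * L (b⁻¹ • z₂)) :=
        mul_le_mul_of_nonneg_left hconv hab.le
    _ = perspective L a z₁ + perspective L b z₂ := by
        rw [perspective, perspective]; field_simp

def hopfLaxCosts (L : E → ℝ) (f : E → ℝ → ℝ) (x : E) (t : ℝ) : Set ℝ :=
  {r | ∃ (τ : ℝ) (y : E), 0 ≤ τ ∧ τ < t ∧ r = perspective L (t - τ) (x - y) + f y τ}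

noncomputable def hopfLax (L : E → ℝ) (f : E → ℝ → ℝ) (x : E) (t : ℝ) : ℝ :=
  sInf (hopfLaxCosts L f x t)

/-- `u` stands for the value function at the intermediate time `s`. -/
def dppCosts (L : E → ℝ) (f : E → ℝ → ℝ) (u : E → ℝ) (x : E) (s t : ℝ) : Set ℝ :=
  {r | ∃ (τ : ℝ) (y : E), 0 ≤ τ ∧ τ < t ∧
    r = perspective L (t - max τ s) (x - y) + if τ < s then u y else f y τ}

variable {L : E → ℝ} {f : E → ℝ → ℝ}

theorem hopfLaxCosts_nonempty (x : E) {t : ℝ} (ht : 0 < t) : (hopfLaxCosts L f x t).Nonempty :=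
  ⟨_, 0, x, le_rfl, ht, rfl⟩

theorem bddBelow_hopfLaxCosts (hL : BddBelow (range L))
    (hf : ∃ m, ∀ y τ, 0 ≤ τ → m ≤ f y τ) (x : E) (t : ℝ) : BddBelow (hopfLaxCosts L f x t) := by
  obtain ⟨m, hm⟩ := hL
  obtain ⟨m', hm'⟩ := hf
  refine ⟨-(t * |m|) + m', ?_⟩
  rintro _ ⟨τ, y, hτ, hτt, rfl⟩
  have hLm : m ≤ L ((t - τ)⁻¹ • (x - y)) := hm (mem_range_self _)
  have hpersp : -(t * |m|) ≤ perspective L (t - τ) (x - y) := by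
    rw [perspective]
    nlinarith [neg_abs_le m, abs_nonneg m]
  linarith [hm' y τ hτ]

theorem hopfLax_le {x : E} {t : ℝ} (hbdd : BddBelow (hopfLaxCosts L f x t)) {τ : ℝ}
    (hτ : 0 ≤ τ) (hτt : τ < t) (y : E) : hopfLax L f x t ≤ perspective L (t - τ) (x - y) + f y τ :=
  csInf_le hbdd ⟨τ, y, hτ, hτt, rfl⟩

theorem hopfLax_le_perspective_add_hopfLax (hL : ConvexOn ℝ univ L) {x : E} {t : ℝ}
    (hbdd : BddBelow (hopfLaxCosts L f x t)) {s : ℝ} (hs : 0 < s) (hst : s < t) (y : E) :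
    hopfLax L f x t ≤ perspective L (t - s) (x - y) + hopfLax L f y s := by
  rw [← sub_le_iff_le_add']
  refine le_csInf (hopfLaxCosts_nonempty y hs) ?_
  rintro _ ⟨τ, z, hτ, hτs, rfl⟩
  have hsplit := hL.perspective_add_le (sub_pos.2 hst) (sub_pos.2 hτs) (x - y) (y - z)
  rw [sub_add_sub_cancel, sub_add_sub_cancel] at hsplit
  linarith [hopfLax_le hbdd hτ (hτs.trans hst) z]

/-- The witness is the point where the straight path from `(y, τ)` to `(x, t)` is at time `s`. -/
theorem exists_dppCost_le {s : ℝ} (hbdd : ∀ y, BddBelow (hopfLaxCosts L f y s)) {x : E} {t τ : ℝ}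
    (hτ : 0 ≤ τ) (hτs : τ < s) (hst : s < t) (y : E) :
    ∃ y', perspective L (t - s) (x - y') + hopfLax L f y' s ≤
      perspective L (t - τ) (x - y) + f y τ := by
  have htτ : t - τ ≠ 0 := by linarith
  set v := (t - τ)⁻¹ • (x - y)
  have hxy : x - y = (t - τ) • v := by rw [smul_smul, mul_inv_cancel₀ htτ, one_smul]
  refine ⟨y + (s - τ) • v, ?_⟩
  have hx : x - (y + (s - τ) • v) = (t - s) • v := by
    rw [← sub_sub, hxy, ← sub_smul, sub_sub_sub_cancel_right]
  have hy := hopfLax_le (hbdd (y + (s - τ) • v)) hτ hτs y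
  rw [add_sub_cancel_left, perspective_smul L (by linarith)] at hy
  rw [hx, hxy, perspective_smul L (by linarith), perspective_smul L htτ]
  linarith

theorem dppCosts_nonempty (u : E → ℝ) (x : E) (s : ℝ) {t : ℝ} (ht : 0 < t) :
    (dppCosts L f u x s t).Nonempty :=
  ⟨_, 0, x, le_rfl, ht, rfl⟩

theorem hopfLax_eq_sInf_dppCosts (hL : ConvexOn ℝ univ L)
    (hbdd : ∀ y u, BddBelow (hopfLaxCosts L f y u)) {x : E} {s t : ℝ} (hs : 0 < s) (hst : s < t) :
    hopfLax L f x t = sInf (dppCosts L f (hopfLax L f · s) x s t) := by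
  refine (IsGLB.csInf_eq ⟨?_, fun b hb => ?_⟩ (dppCosts_nonempty _ x s (hs.trans hst))).symm
  · rintro _ ⟨τ, y, hτ, hτt, rfl⟩
    by_cases hτs : τ < s
    · rw [if_pos hτs, max_eq_right hτs.le]
      exact hopfLax_le_perspective_add_hopfLax hL (hbdd x t) hs hst y
    · rw [if_neg hτs, max_eq_left (not_lt.1 hτs)]
      exact hopfLax_le (hbdd x t) hτ hτt y
  · refine le_csInf (hopfLaxCosts_nonempty x (hs.trans hst)) ?_
    rintro _ ⟨τ, y, hτ, hτt, rfl⟩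
    by_cases hτs : τ < s
    · obtain ⟨y', hy'⟩ := exists_dppCost_le (fun y => hbdd y s) hτ hτs hst y
      refine (hb ⟨τ, y', hτ, hτt, ?_⟩).trans hy'
      rw [if_pos hτs, max_eq_right hτs.le]
    · refine hb ⟨τ, y, hτ, hτt, ?_⟩
      rw [if_neg hτs, max_eq_left (not_lt.1 hτs)]

end HopfLax

theorem stmt_5_general (n : ℕ) (Lbar : EuclideanSpace ℝ (Fin n) → ℝ) (K₀ : ℝ)
    (hLconv : ConvexOn ℝ Set.univ Lbar)
    (hLb : ∀ v, ‖v‖ ^ 2 / 2 - K₀ ≤ Lbar v ∧ Lbar v ≤ ‖v‖ ^ 2 / 2 + K₀)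
    (g bbar : EuclideanSpace ℝ (Fin n) → ℝ)
    (hgbd : ∃ M, ∀ x, |g x| ≤ M) (hbbd : ∃ M, ∀ x, |bbar x| ≤ M)
    (f : EuclideanSpace ℝ (Fin n) → ℝ → ℝ)
    (hf0 : ∀ y, f y 0 = g y) (hfp : ∀ y τ, 0 < τ → f y τ = bbar y)
    (w : EuclideanSpace ℝ (Fin n) → ℝ → ℝ)
    (hw : ∀ x t, 0 < t → w x t =
      sInf {r | ∃ (τ : ℝ) (y : EuclideanSpace ℝ (Fin n)), 0 ≤ τ ∧ τ < t ∧
        r = (t - τ) * Lbar ((t - τ)⁻¹ • (x - y)) + f y τ}) :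
    ∀ (x : EuclideanSpace ℝ (Fin n)) (s t : ℝ), 0 < s → s < t →
      w x t = sInf {r | ∃ (τ : ℝ) (y : EuclideanSpace ℝ (Fin n)), 0 ≤ τ ∧ τ < t ∧
        r = (t - max τ s) * Lbar ((t - max τ s)⁻¹ • (x - y)) +
          (if τ < s then w y s else f y τ)} := by
  intro x s t hs hst
  have hLbdd : BddBelow (range Lbar) := by
    refine ⟨-K₀, ?_⟩
    rintro _ ⟨v, rfl⟩
    linarith [(hLb v).1, sq_nonneg ‖v‖]
  have hfbdd : ∃ m, ∀ y τ, 0 ≤ τ → m ≤ f y τ := by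
    obtain ⟨Mg, hMg⟩ := hgbd
    obtain ⟨Mb, hMb⟩ := hbbd
    refine ⟨-max Mg Mb, fun y τ hτ => ?_⟩
    rcases hτ.lt_or_eq with hτ | rfl
    · rw [hfp y τ hτ]; linarith [neg_abs_le (bbar y), hMb y, le_max_right Mg Mb]
    · rw [hf0]; linarith [neg_abs_le (g y), hMg y, le_max_left Mg Mb]
  have hws : (fun y => w y s) = (hopfLax Lbar f · s) := funext fun y => hw y s hs
  rw [hw x t (hs.trans hst)]
  change hopfLax Lbar f x t = sInf (dppCosts Lbar f (fun y => w y s) x s t)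
  rw [hws]
  exact hopfLax_eq_sInf_dppCosts hLconv (bddBelow_hopfLaxCosts hLbdd hfbdd) hs hst

theorem stmt_5 (n : ℕ) (Lbar : EuclideanSpace ℝ (Fin n) → ℝ) (K₀ : ℝ) (hK₀ : 0 < K₀)
    (hLc : Continuous Lbar) (hLconv : ConvexOn ℝ Set.univ Lbar)
    (hLb : ∀ v, ‖v‖ ^ 2 / 2 - K₀ ≤ Lbar v ∧ Lbar v ≤ ‖v‖ ^ 2 / 2 + K₀)
    (g bbar : EuclideanSpace ℝ (Fin n) → ℝ)
    (Lg : ℝ≥0) (hglip : LipschitzWith Lg g)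
    (hgbd : ∃ M, ∀ x, |g x| ≤ M) (hbbd : ∃ M, ∀ x, |bbar x| ≤ M)
    (hbuc : UniformContinuous bbar)
    (hgb : ∀ x, g x ≤ bbar x)
    (f : EuclideanSpace ℝ (Fin n) → ℝ → ℝ)
    (hf0 : ∀ y, f y 0 = g y) (hfp : ∀ y τ, 0 < τ → f y τ = bbar y)
    (w : EuclideanSpace ℝ (Fin n) → ℝ → ℝ)
    (hw0 : ∀ x, w x 0 = g x)
    (hw : ∀ x t, 0 < t → w x t =
      sInf {r | ∃ (τ : ℝ) (y : EuclideanSpace ℝ (Fin n)), 0 ≤ τ ∧ τ < t ∧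
        r = (t - τ) * Lbar ((t - τ)⁻¹ • (x - y)) + f y τ}) :
    ∀ (x : EuclideanSpace ℝ (Fin n)) (s t : ℝ), 0 < s → s < t →
      w x t = sInf {r | ∃ (τ : ℝ) (y : EuclideanSpace ℝ (Fin n)), 0 ≤ τ ∧ τ < t ∧
        r = (t - max τ s) * Lbar ((t - max τ s)⁻¹ • (x - y)) +
          (if τ < s then w y s else f y τ)} :=
  stmt_5_general n Lbar K₀ hLconv hLb g bbar hgbd hbbd f hf0 hfp w hw
end

section
/- Let g : ℝⁿ → ℝ be Lipschitz and let L̄, H̄ be a convex conjugate pair (L̄(v) = sup_p (p·v − H̄(p))) with H̄(Dg(x)) ≤ C̃ := ‖Dg‖_∞²/2 + K₀ for a.e. x. Then for all x, y ∈ ℝⁿ and 0 ≤ τ < t, g(x) − g(y) ≤ (t−τ)·[C̃ + L̄((x−y)/(t−τ))]. Consequently, the Hopf–Lax value w satisfies g(x) ≤ w(x,t) + C̃·t. -/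
/-!
For every velocity `v`, testing the supremum defining `L̄ v` at a momentum `p` with `‖p‖ ≤ Lip g`
and `⟪p, v⟫ = Lip g * ‖v‖` gives `Lip g * ‖v‖ ≤ H̄ p + L̄ v ≤ C̃ + L̄ v` (Fenchel–Young).
Applied to `v = (x - y) / (t - τ)`, the Lipschitz bound `g x - g y ≤ Lip g * ‖x - y‖` becomes the
first claim. Since `f y τ ≥ g y` and `C̃ ≥ 0`, every competitor in the Hopf–Lax infimum is at least
`g x - C̃ t`, which is the second claim.
-/

open NNReal

section FenchelYoung

open RealInnerProductSpace

variable {E : Type*} [NormedAddCommGroup E] [InnerProductSpace ℝ E]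

lemma bddAbove_range_inner_sub_of_forall_le {H : E → ℝ} {K : ℝ}
    (hH : ∀ p, ‖p‖ ^ 2 / 2 - K ≤ H p) (v : E) :
    BddAbove (Set.range fun p => ⟪p, v⟫ - H p) := by
  refine ⟨‖v‖ ^ 2 / 2 + K, ?_⟩
  rintro _ ⟨p, rfl⟩
  nlinarith [real_inner_le_norm p v, sq_nonneg (‖p‖ - ‖v‖), hH p]

lemma exists_norm_le_inner_eq_mul_norm {r : ℝ} (hr : 0 ≤ r) (v : E) :
    ∃ p : E, ‖p‖ ≤ r ∧ ⟪p, v⟫ = r * ‖v‖ := by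
  rcases eq_or_ne v 0 with rfl | hv
  · exact ⟨0, by simpa using hr, by simp⟩
  have hv' : ‖v‖ ≠ 0 := norm_ne_zero_iff.2 hv
  refine ⟨(r / ‖v‖) • v, ?_, ?_⟩
  · rw [norm_smul, Real.norm_of_nonneg (by positivity), div_mul_cancel₀ r hv']
  · rw [real_inner_smul_left, real_inner_self_eq_norm_sq]
    field_simp

lemma mul_norm_le_add_iSup_inner_sub {H : E → ℝ} {v : E} {r C : ℝ} (hr : 0 ≤ r)
    (hbdd : BddAbove (Set.range fun p => ⟪p, v⟫ - H p)) (hHC : ∀ p, ‖p‖ ≤ r → H p ≤ C) :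
    r * ‖v‖ ≤ C + ⨆ p, (⟪p, v⟫ - H p) := by
  obtain ⟨p, hpr, hpv⟩ := exists_norm_le_inner_eq_mul_norm hr v
  linarith [le_ciSup hbdd p, hHC p hpr]

end FenchelYoung

lemma LipschitzWith.sub_le_mul_add {E : Type*} [SeminormedAddCommGroup E] [NormedSpace ℝ E]
    {g L : E → ℝ} {K : ℝ≥0} {C : ℝ} (hg : LipschitzWith K g) (hL : ∀ v, K * ‖v‖ ≤ C + L v)
    (x y : E) {s : ℝ} (hs : 0 < s) :
    g x - g y ≤ s * (C + L (s⁻¹ • (x - y))) :=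
  calc g x - g y ≤ K * ‖x - y‖ := 
      sub_le_iff_le_add'.2 (dist_eq_norm x y ▸ hg.le_add_mul x y)
    _ = s * (K * ‖s⁻¹ • (x - y)‖) := by
      rw [norm_smul, Real.norm_of_nonneg (inv_pos.2 hs).le]
      field_simp
    _ ≤ s * (C + L (s⁻¹ • (x - y))) := mul_le_mul_of_nonneg_left (hL _) hs.le

theorem stmt_6_general (n : ℕ) (Hbar Lbar : EuclideanSpace ℝ (Fin n) → ℝ) (K₀ : ℝ) (hK₀ : 0 < K₀)
    (hHb : ∀ p, ‖p‖ ^ 2 / 2 - K₀ ≤ Hbar p ∧ Hbar p ≤ ‖p‖ ^ 2 / 2 + K₀)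
    (hL : ∀ v, Lbar v = ⨆ p : EuclideanSpace ℝ (Fin n), ((inner ℝ p v : ℝ) - Hbar p))
    (g bbar : EuclideanSpace ℝ (Fin n) → ℝ)
    (Lg : ℝ≥0) (hglip : LipschitzWith Lg g)
    (hgb : ∀ x, g x ≤ bbar x)
    (f : EuclideanSpace ℝ (Fin n) → ℝ → ℝ)
    (hf0 : ∀ y, f y 0 = g y) (hfp : ∀ y τ, 0 < τ → f y τ = bbar y)
    (Ctilde : ℝ) (hCt : Ctilde = (Lg : ℝ) ^ 2 / 2 + K₀)
    (w : EuclideanSpace ℝ (Fin n) → ℝ → ℝ)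
    (hw : ∀ x t, 0 < t → w x t =
      sInf {r | ∃ (τ : ℝ) (y : EuclideanSpace ℝ (Fin n)), 0 ≤ τ ∧ τ < t ∧
        r = (t - τ) * Lbar ((t - τ)⁻¹ • (x - y)) + f y τ}) :
    (∀ (x y : EuclideanSpace ℝ (Fin n)) (τ t : ℝ), 0 ≤ τ → τ < t →
      g x - g y ≤ (t - τ) * (Ctilde + Lbar ((t - τ)⁻¹ • (x - y)))) ∧
    (∀ (x : EuclideanSpace ℝ (Fin n)) (t : ℝ), 0 < t → g x ≤ w x t + Ctilde * t) := by
  have hCt_nonneg : 0 ≤ Ctilde := by rw [hCt]; positivity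
  have hHbar_le : ∀ p, ‖p‖ ≤ Lg → Hbar p ≤ Ctilde := fun p hp => by
    rw [hCt]; nlinarith [(hHb p).2, norm_nonneg p]
  have hFenchelYoung : ∀ v, Lg * ‖v‖ ≤ Ctilde + Lbar v := fun v => by
    rw [hL]
    exact mul_norm_le_add_iSup_inner_sub Lg.coe_nonneg
      (bddAbove_range_inner_sub_of_forall_le (fun p => (hHb p).1) v) hHbar_le
  have hdiff : ∀ (x y : EuclideanSpace ℝ (Fin n)) (τ t : ℝ), 0 ≤ τ → τ < t →
      g x - g y ≤ (t - τ) * (Ctilde + Lbar ((t - τ)⁻¹ • (x - y))) :=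
    fun x y _ _ _ hτt => hglip.sub_le_mul_add hFenchelYoung x y (sub_pos.2 hτt)
  have hg_le_f : ∀ y τ, 0 ≤ τ → g y ≤ f y τ := fun y τ hτ => by
    rcases hτ.eq_or_lt with rfl | hτ
    · exact (hf0 y).ge
    · exact (hfp y τ hτ).symm ▸ hgb y
  refine ⟨hdiff, fun x t ht => ?_⟩
  suffices g x - Ctilde * t ≤ w x t by linarith
  rw [hw x t ht]
  refine le_csInf ⟨_, 0, x, le_rfl, ht, rfl⟩ ?_
  rintro _ ⟨τ, y, hτ, hτt, rfl⟩
  linarith [hdiff x y τ t hτ hτt, hg_le_f y τ hτ, mul_le_mul_of_nonneg_left hτ hCt_nonneg]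

theorem stmt_6 (n : ℕ) (Hbar Lbar : EuclideanSpace ℝ (Fin n) → ℝ) (K₀ : ℝ) (hK₀ : 0 < K₀)
    (hHc : Continuous Hbar) (hHconv : ConvexOn ℝ Set.univ Hbar)
    (hHb : ∀ p, ‖p‖ ^ 2 / 2 - K₀ ≤ Hbar p ∧ Hbar p ≤ ‖p‖ ^ 2 / 2 + K₀)
    (hL : ∀ v, Lbar v = ⨆ p : EuclideanSpace ℝ (Fin n), ((inner ℝ p v : ℝ) - Hbar p))
    (g bbar : EuclideanSpace ℝ (Fin n) → ℝ)
    (Lg : ℝ≥0) (hglip : LipschitzWith Lg g)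
    (hgb : ∀ x, g x ≤ bbar x)
    (f : EuclideanSpace ℝ (Fin n) → ℝ → ℝ)
    (hf0 : ∀ y, f y 0 = g y) (hfp : ∀ y τ, 0 < τ → f y τ = bbar y)
    (Ctilde : ℝ) (hCt : Ctilde = (Lg : ℝ) ^ 2 / 2 + K₀)
    (w : EuclideanSpace ℝ (Fin n) → ℝ → ℝ)
    (hw : ∀ x t, 0 < t → w x t =
      sInf {r | ∃ (τ : ℝ) (y : EuclideanSpace ℝ (Fin n)), 0 ≤ τ ∧ τ < t ∧
        r = (t - τ) * Lbar ((t - τ)⁻¹ • (x - y)) + f y τ}) :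
    (∀ (x y : EuclideanSpace ℝ (Fin n)) (τ t : ℝ), 0 ≤ τ → τ < t →
      g x - g y ≤ (t - τ) * (Ctilde + Lbar ((t - τ)⁻¹ • (x - y)))) ∧
    (∀ (x : EuclideanSpace ℝ (Fin n)) (t : ℝ), 0 < t → g x ≤ w x t + Ctilde * t) :=
  stmt_6_general n Hbar Lbar K₀ hK₀ hHb hL g bbar Lg hglip hgb f hf0 hfp Ctilde hCt w hw
end

section
/- Assume L : ℝⁿ × ℝⁿ → ℝ satisfies min_v L(y,v) = L(y,0) = 0 for every y. Let u^ε(x,t) be the Dirichlet value function: the infimum over τ ∈ [0,t) and curves ξ in Ω̄_ε with ξ(t)=x, (ξ(τ),τ) on the parabolic boundary, of ∫_τ^t L(ξ(s)/ε, ξ'(s)) ds + f_ε(ξ(τ),τ), where f_ε(y,0)=g(y) and f_ε(y,τ)=b(y,y/ε) for τ>0 with g(y) ≤ b(y,y/ε). Let û^ε(x,t) be the state-constraint value function: the infimum over curves ξ in Ω̄_ε with ξ(t)=x of ∫_0^t L(ξ(s)/ε, ξ'(s)) ds + g(ξ(0)). Then u^ε = û^ε on Ω̄_ε × (0,∞).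 -/
open MeasureTheory NNReal

theorem stmt_14 (n : ℕ) (ε : ℝ) (hε : 0 < ε)
    (Ωε : Set (EuclideanSpace ℝ (Fin n))) (hopen : IsOpen Ωε)
    (L : EuclideanSpace ℝ (Fin n) → EuclideanSpace ℝ (Fin n) → ℝ)
    (hLc : Continuous fun q : EuclideanSpace ℝ (Fin n) × EuclideanSpace ℝ (Fin n) => L q.1 q.2)
    (hL0 : ∀ y v, 0 ≤ L y v) (hL00 : ∀ y, L y 0 = 0)
    (g : EuclideanSpace ℝ (Fin n) → ℝ) (Lg : ℝ≥0) (hglip : LipschitzWith Lg g)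
    (hgbd : ∃ M, ∀ y, |g y| ≤ M)
    (b : EuclideanSpace ℝ (Fin n) → EuclideanSpace ℝ (Fin n) → ℝ)
    (hbc : Continuous fun q : EuclideanSpace ℝ (Fin n) × EuclideanSpace ℝ (Fin n) => b q.1 q.2)
    (hbbd : ∃ M, ∀ y z, |b y z| ≤ M)
    (hgb : ∀ y, g y ≤ b y (ε⁻¹ • y))
    (fε : EuclideanSpace ℝ (Fin n) → ℝ → ℝ)
    (hf0 : ∀ y, fε y 0 = g y) (hfp : ∀ y τ, 0 < τ → fε y τ = b y (ε⁻¹ • y))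
    (uε hatuε : EuclideanSpace ℝ (Fin n) → ℝ → ℝ)
    (hu : ∀ x t, 0 < t → x ∈ closure Ωε → uε x t =
      sInf {r | ∃ (τ : ℝ) (ξ ξ' : ℝ → EuclideanSpace ℝ (Fin n)),
        0 ≤ τ ∧ τ < t ∧ IntervalIntegrable ξ' volume τ t ∧
        (∀ s ∈ Set.Icc τ t, ξ s = ξ τ + ∫ u in τ..s, ξ' u) ∧
        (∀ s ∈ Set.Icc τ t, ξ s ∈ closure Ωε) ∧ ξ t = x ∧
        ((τ = 0 ∧ ξ 0 ∈ closure Ωε) ∨ (0 < τ ∧ ξ τ ∈ frontier Ωε)) ∧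
        r = (∫ s in τ..t, L (ε⁻¹ • ξ s) (ξ' s)) + fε (ξ τ) τ})
    (hhat : ∀ x t, 0 < t → x ∈ closure Ωε → hatuε x t =
      sInf {r | ∃ (ξ ξ' : ℝ → EuclideanSpace ℝ (Fin n)),
        IntervalIntegrable ξ' volume 0 t ∧
        (∀ s ∈ Set.Icc (0 : ℝ) t, ξ s = ξ 0 + ∫ u in (0 : ℝ)..s, ξ' u) ∧
        (∀ s ∈ Set.Icc (0 : ℝ) t, ξ s ∈ closure Ωε) ∧ ξ t = x ∧
        r = (∫ s in (0 : ℝ)..t, L (ε⁻¹ • ξ s) (ξ' s)) + g (ξ 0)}) :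
    ∀ x t, 0 < t → x ∈ closure Ωε → uε x t = hatuε x t := by
  intro x t ht hx
  obtain ⟨Mg, hMg⟩ := hgbd
  obtain ⟨Mb, hMb⟩ := hbbd
  rw [hu x t ht hx, hhat x t ht hx]
  set A := {r | ∃ (τ : ℝ) (ξ ξ' : ℝ → EuclideanSpace ℝ (Fin n)),
        0 ≤ τ ∧ τ < t ∧ IntervalIntegrable ξ' volume τ t ∧
        (∀ s ∈ Set.Icc τ t, ξ s = ξ τ + ∫ u in τ..s, ξ' u) ∧
        (∀ s ∈ Set.Icc τ t, ξ s ∈ closure Ωε) ∧ ξ t = x ∧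
        ((τ = 0 ∧ ξ 0 ∈ closure Ωε) ∨ (0 < τ ∧ ξ τ ∈ frontier Ωε)) ∧
        r = (∫ s in τ..t, L (ε⁻¹ • ξ s) (ξ' s)) + fε (ξ τ) τ} with hA
  set B := {r | ∃ (ξ ξ' : ℝ → EuclideanSpace ℝ (Fin n)),
        IntervalIntegrable ξ' volume 0 t ∧
        (∀ s ∈ Set.Icc (0 : ℝ) t, ξ s = ξ 0 + ∫ u in (0 : ℝ)..s, ξ' u) ∧
        (∀ s ∈ Set.Icc (0 : ℝ) t, ξ s ∈ closure Ωε) ∧ ξ t = x ∧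
        r = (∫ s in (0 : ℝ)..t, L (ε⁻¹ • ξ s) (ξ' s)) + g (ξ 0)} with hB
  -- B is nonempty: constant curve at x
  have hBne : B.Nonempty := by
    refine ⟨g x, fun _ => x, fun _ => 0, intervalIntegrable_const, ?_, ?_, rfl, ?_⟩
    · intro s _; simp
    · intro s _; exact hx
    · simp [hL00]
  -- B ⊆ A (taking τ = 0)
  have hBA : B ⊆ A := by
    rintro r ⟨ξ, ξ', hint, hpath, hclos, hξt, hr⟩
    refine ⟨0, ξ, ξ', le_rfl, ht, hint, hpath, hclos, hξt,
      Or.inl ⟨rfl, hclos 0 ⟨le_rfl, ht.le⟩⟩, ?_⟩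
    rw [hr, hf0]
  -- A is bounded below
  have hAbdd : BddBelow A := by
    refine ⟨-(max Mg Mb), ?_⟩
    rintro r ⟨τ, ξ, ξ', hτ0, hτt, hint, hpath, hclos, hξt, hbc', hr⟩
    have hInn : 0 ≤ ∫ s in τ..t, L (ε⁻¹ • ξ s) (ξ' s) :=
      intervalIntegral.integral_nonneg hτt.le (fun u _ => hL0 _ _)
    have hfb : -(max Mg Mb) ≤ fε (ξ τ) τ := by
      rcases hbc' with ⟨h0, -⟩ | ⟨hpos, -⟩
      · rw [h0, hf0]
        have := (abs_le.mp (hMg (ξ 0))).1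
        have h2 : -(max Mg Mb) ≤ -Mg := neg_le_neg (le_max_left _ _)
        · rw [h0] at *; linarith
      · rw [hfp _ _ hpos]
        have := (abs_le.mp (hMb (ξ τ) (ε⁻¹ • ξ τ))).1
        have h2 : -(max Mg Mb) ≤ -Mb := neg_le_neg (le_max_right _ _)
        linarith
    rw [hr]; linarith
  -- B is bounded below
  have hBbdd : BddBelow B := by
    refine ⟨-Mg, ?_⟩
    rintro r ⟨ξ, ξ', hint, hpath, hclos, hξt, hr⟩
    have hInn : 0 ≤ ∫ s in (0:ℝ)..t, L (ε⁻¹ • ξ s) (ξ' s) :=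
      intervalIntegral.integral_nonneg ht.le (fun u _ => hL0 _ _)
    have := (abs_le.mp (hMg (ξ 0))).1
    rw [hr]; linarith
  have hAne : A.Nonempty := hBne.mono hBA
  refine le_antisymm (csInf_le_csInf hAbdd hBne hBA) (le_csInf hAne ?_)
  -- main direction: for every element of A, find a smaller element of B
  rintro r ⟨τ, ξ, ξ', hτ0, hτt, hint, hpath, hclos, hξt, hbc', hr⟩
  set η : ℝ → EuclideanSpace ℝ (Fin n) := fun s => ξ (max s τ) with hη
  set η' : ℝ → EuclideanSpace ℝ (Fin n) := fun s => if s ≤ τ then 0 else ξ' s with hη'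
  have hη0 : η 0 = ξ τ := by simp [hη, max_eq_right hτ0]
  -- integrability pieces
  have h1 : IntervalIntegrable η' volume 0 τ := by
    rw [intervalIntegrable_iff, Set.uIoc_of_le hτ0]
    exact (integrableOn_zero).congr_fun (fun u hu => by simp [hη', hu.2]) measurableSet_Ioc
  have hIocint : IntegrableOn ξ' (Set.Ioc τ t) volume := by
    have := intervalIntegrable_iff.mp hint
    rwa [Set.uIoc_of_le hτt.le] at this
  have h2 : IntervalIntegrable η' volume τ t := by
    rw [intervalIntegrable_iff, Set.uIoc_of_le hτt.le]
    exact hIocint.congr_fun (fun u hu => by simp [hη', not_le.mpr hu.1]) measurableSet_Ioc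
  have hη'int : IntervalIntegrable η' volume 0 t := h1.trans h2
  have hzero : ∀ s : ℝ, 0 ≤ s → s ≤ τ → (∫ u in (0:ℝ)..s, η' u) = 0 := by
    intro s hs0 hsτ
    have : ∀ u ∈ Set.uIcc (0:ℝ) s, η' u = (fun _ => (0 : EuclideanSpace ℝ (Fin n))) u := by
      intro u hu
      rw [Set.uIcc_of_le hs0] at hu
      simp [hη', hu.2.trans hsτ]
    rw [intervalIntegral.integral_congr this]
    simp
  -- η satisfies path property
  have hpathη : ∀ s ∈ Set.Icc (0:ℝ) t, η s = η 0 + ∫ u in (0:ℝ)..s, η' u := by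
    intro s hs
    rcases le_or_gt s τ with h | h
    · rw [hzero s hs.1 h, hη0]
      simp [hη, max_eq_right h]
    · have hmax : max s τ = s := max_eq_left h.le
      have hps := hpath s ⟨h.le, hs.2⟩
      have hsplit : (∫ u in (0:ℝ)..s, η' u) =
          (∫ u in (0:ℝ)..τ, η' u) + ∫ u in τ..s, η' u :=
        (intervalIntegral.integral_add_adjacent_intervals h1
          (h2.mono_set (Set.uIcc_subset_uIcc Set.left_mem_uIcc
            (by rw [Set.uIcc_of_le hτt.le]; exact ⟨h.le, hs.2⟩)))).symm
      have hcg : (∫ u in τ..s, η' u) = ∫ u in τ..s, ξ' u := by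
        apply intervalIntegral.integral_congr_ae
        filter_upwards with u hu
        rw [Set.uIoc_of_le h.le] at hu
        simp [hη', not_le.mpr hu.1]
      rw [hsplit, hzero τ hτ0 le_rfl, hcg, hη0, zero_add]
      simp only [hη, hmax]
      exact hps
  have hclosη : ∀ s ∈ Set.Icc (0:ℝ) t, η s ∈ closure Ωε := by
    intro s hs
    exact hclos (max s τ) ⟨le_max_right _ _, max_le hs.2 hτt.le⟩
  have hηt : η t = x := by simp only [hη, max_eq_left hτt.le]; exact hξt
  -- cost identity
  have hI : (∫ s in (0:ℝ)..t, L (ε⁻¹ • η s) (η' s)) =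
      ∫ s in τ..t, L (ε⁻¹ • ξ s) (ξ' s) := by
    rw [intervalIntegral.integral_of_le ht.le, intervalIntegral.integral_of_le hτt.le]
    have hsub : Set.Ioc τ t ⊆ Set.Ioc 0 t := Set.Ioc_subset_Ioc_left hτ0
    calc ∫ s in Set.Ioc 0 t, L (ε⁻¹ • η s) (η' s)
        = ∫ s in Set.Ioc 0 t,
            (Set.Ioc τ t).indicator (fun s => L (ε⁻¹ • η s) (η' s)) s := by
          apply setIntegral_congr_fun measurableSet_Ioc
          intro s hs
          by_cases hm : s ∈ Set.Ioc τ t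
          · rw [Set.indicator_of_mem hm]
          · rw [Set.indicator_of_notMem hm]
            have hsτ : s ≤ τ := by
              by_contra hc
              exact hm ⟨not_le.mp hc, hs.2⟩
            simp [hη', hsτ, hL00]
      _ = ∫ s in Set.Ioc 0 t ∩ Set.Ioc τ t, L (ε⁻¹ • η s) (η' s) :=
          setIntegral_indicator measurableSet_Ioc
      _ = ∫ s in Set.Ioc τ t, L (ε⁻¹ • η s) (η' s) := by
          rw [Set.inter_eq_self_of_subset_right hsub]
      _ = ∫ s in Set.Ioc τ t, L (ε⁻¹ • ξ s) (ξ' s) := by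
          apply setIntegral_congr_fun measurableSet_Ioc
          intro s hs
          simp [hη, hη', max_eq_left hs.1.le, not_le.mpr hs.1]
  -- the value of the new curve
  have hmem : ((∫ s in (0:ℝ)..t, L (ε⁻¹ • η s) (η' s)) + g (η 0)) ∈ B :=
    ⟨η, η', hη'int, hpathη, hclosη, hηt, rfl⟩
  have hle : ((∫ s in (0:ℝ)..t, L (ε⁻¹ • η s) (η' s)) + g (η 0)) ≤ r := by
    rw [hr, hI, hη0]
    have hgf : g (ξ τ) ≤ fε (ξ τ) τ := by
      rcases hbc' with ⟨h0, -⟩ | ⟨hpos, -⟩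
      · rw [h0, hf0]
      · rw [hfp _ _ hpos]; exact hgb _
    linarith
  exact (csInf_le hBbdd hmem).trans hle
end

section
/- Let Ω ⊂ ℝⁿ be open and ℤⁿ-periodic (Ω + ℤⁿ = Ω) with C² boundary, so that the distance function d(x) = dist(x, ∂Ω) is C² on a uniform strip U_ρ = {x : d(x) < ρ} for some ρ > 0. Then there exists a C¹ map ζ : Ω̄ → ℝⁿ such that x + δ·ζ(x) ∈ Ω for all x ∈ Ω̄ and all δ ∈ (0,1). -/
/-!
Let `d` be the distance to `∂Ω`. Since `d` is `C²` up to the boundary, `∇d` extends to a `C¹`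
field `ν` on the closed strip `{x ∈ closure Ω | d x < ρ}`. Near a boundary point `∇d` is almost
constant, so along the segment `t ↦ y + t ∇d(y)` the distance grows at rate at least `1/2`: the
segment never meets `∂Ω`, hence stays in `Ω`. Compactness of a period cell and `ℤⁿ`-invariance
make the admissible length `ε` uniform, and a limit argument extends the conclusion to boundary
points. Then `ζ = ε φ(d) ν`, with a smooth cutoff `φ` that is positive exactly on `d < ε`, works.
-/

open Metric Set Filter Topology
open scoped Gradient RealInnerProductSpace

section MetricSpace

variable {X : Type*} [PseudoMetricSpace X] {Ω : Set X}

theorem IsOpen.mem_of_mem_closure_of_notMem_frontier (hΩ : IsOpen Ω) {x : X}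
    (hx : x ∈ closure Ω) (hxf : x ∉ frontier Ω) : x ∈ Ω :=
  of_not_not fun h => hxf (hΩ.frontier_eq ▸ ⟨hx, h⟩)

theorem IsOpen.notMem_frontier (hΩ : IsOpen Ω) {x : X} (hx : x ∈ Ω) : x ∉ frontier Ω :=
  fun hxf => (hΩ.frontier_eq ▸ hxf : x ∈ closure Ω \ Ω).2 hx

theorem IsOpen.infDist_frontier_pos (hΩ : IsOpen Ω) (hfr : (frontier Ω).Nonempty) {x : X}
    (hx : x ∈ Ω) : 0 < infDist x (frontier Ω) :=
  (isClosed_frontier.notMem_iff_infDist_pos hfr).1 (hΩ.notMem_frontier hx)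

def boundaryStrip (Ω : Set X) (ρ : ℝ) : Set X :=
  {x | x ∈ closure Ω ∧ infDist x (frontier Ω) < ρ}

theorem IsOpen.mem_interior_boundaryStrip (hΩ : IsOpen Ω) {ρ : ℝ} {y : X} (hy : y ∈ Ω)
    (hyρ : infDist y (frontier Ω) < ρ) : y ∈ interior (boundaryStrip Ω ρ) :=
  interior_maximal (fun z (hz : z ∈ Ω ∩ {x | infDist x (frontier Ω) < ρ}) =>
      (⟨subset_closure hz.1, hz.2⟩ : z ∈ boundaryStrip Ω ρ))
    (hΩ.inter (isOpen_lt (continuous_infDist_pt _) continuous_const)) ⟨hy, hyρ⟩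

theorem IsOpen.boundaryStrip_subset_closure_interior (hΩ : IsOpen Ω) {ρ : ℝ} :
    boundaryStrip Ω ρ ⊆ closure (interior (boundaryStrip Ω ρ)) := fun _ ⟨hx, hxρ⟩ =>
  closure_mono (fun y (hy : y ∈ {x | infDist x (frontier Ω) < ρ} ∩ Ω) =>
      hΩ.mem_interior_boundaryStrip hy.2 hy.1)
    ((isOpen_lt (continuous_infDist_pt _) continuous_const).inter_closure ⟨hxρ, hx⟩)

theorem IsCompact.exists_pos_forall_dist_lt {K : Set X} (hK : IsCompact K) {Q : X → ℝ → Prop}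
    (hQ : ∀ x ∈ K, ∃ r > 0, ∀ y, dist y x < r → ∀ t ∈ Icc 0 r, Q y t) :
    ∃ ε > 0, ∀ x ∈ K, ∀ y, dist y x < ε → ∀ t ∈ Icc 0 ε, Q y t := by
  have : ∀ᶠ ε in 𝓝 (0 : ℝ), ∀ x ∈ K, ∀ y, dist y x < ε → ∀ t ∈ Icc 0 ε, Q y t := by
    refine hK.eventually_forall_of_forall_eventually fun x hx => ?_
    obtain ⟨r, hr, hxr⟩ := hQ x hx
    filter_upwards [(gt_mem_nhds (half_pos hr)).prod_nhds (ball_mem_nhds x (half_pos hr))]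
      with ⟨ε, x'⟩ ⟨hε, hx'⟩ y hy t ht
    exact hxr y (by linarith [dist_triangle y x' x, mem_ball.1 hx']) t ⟨ht.1, by linarith [ht.2]⟩
  obtain ⟨ε, hε, hεpos⟩ := ((this.filter_mono nhdsWithin_le_nhds).and
    (self_mem_nhdsWithin : Ioi (0 : ℝ) ∈ 𝓝[>] 0)).exists
  exact ⟨ε, hεpos, hε⟩

end MetricSpace

section Translation

variable {E : Type*} [NormedAddCommGroup E] {s : Set E} {z : E}

theorem infDist_add_right_of_forall_add_mem_iff (hz : ∀ x, x + z ∈ s ↔ x ∈ s) (x : E) :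
    infDist (x + z) s = infDist x s := by
  have himage : (· + z) '' s = s := by
    ext a
    rw [image_add_right, mem_preimage, ← hz, neg_add_cancel_right]
  conv_lhs => rw [← himage]
  exact infDist_image (isometry_add_right z)

theorem add_mem_frontier_iff_of_forall_add_mem_iff (hz : ∀ x, x + z ∈ s ↔ x ∈ s) (x : E) :
    x + z ∈ frontier s ↔ x ∈ frontier s := by
  have hpre : (Homeomorph.addRight z) ⁻¹' s = s := Set.ext hz
  change x ∈ (Homeomorph.addRight z) ⁻¹' frontier s ↔ _
  rw [Homeomorph.preimage_frontier, hpre]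

end Translation

section NormedSpace

variable {E : Type*} [NormedAddCommGroup E] [NormedSpace ℝ E] {Ω : Set E}

theorem IsOpen.ball_infDist_frontier_subset (hΩ : IsOpen Ω) {x : E} (hx : x ∈ closure Ω) :
    ball x (infDist x (frontier Ω)) ⊆ Ω := by
  intro y hy
  have hne : (ball x (infDist x (frontier Ω)) ∩ Ω).Nonempty :=
    mem_closure_iff.1 hx _ isOpen_ball (mem_ball_self (pos_of_mem_ball hy))
  refine (convex_ball x _).isPreconnected.subset_of_closure_inter_subset hΩ hne ?_ hy
  rintro z ⟨hzc, hz⟩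
  refine hΩ.mem_of_mem_closure_of_notMem_frontier hzc fun hzf => ?_
  rw [mem_ball, dist_comm] at hz
  exact (infDist_le_dist_of_mem hzf).not_gt hz

theorem IsOpen.mem_of_mem_closure_of_infDist_pos (hΩ : IsOpen Ω) {x : E} (hx : x ∈ closure Ω)
    (hpos : 0 < infDist x (frontier Ω)) : x ∈ Ω :=
  hΩ.ball_infDist_frontier_subset hx (mem_ball_self hpos)

theorem IsOpen.add_smul_mem_of_le_fderiv_infDist (hΩ : IsOpen Ω) (hfr : (frontier Ω).Nonempty)
    {y w : E} {c t : ℝ} (hy : y ∈ Ω) (hc : 0 ≤ c) (ht : 0 ≤ t)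
    (hgrowth : ∀ s ∈ Icc 0 t, y + s • w ∈ Ω →
      DifferentiableAt ℝ (infDist · (frontier Ω)) (y + s • w) ∧
        c ≤ fderiv ℝ (infDist · (frontier Ω)) (y + s • w) w) :
    y + t • w ∈ Ω ∧ infDist y (frontier Ω) + c * t ≤ infDist (y + t • w) (frontier Ω) := by
  set d : E → ℝ := (infDist · (frontier Ω))
  have hline : Continuous fun s : ℝ => y + s • w := by fun_prop
  set A : Set ℝ := {s | y + s • w ∈ closure Ω ∧ d y + c * s ≤ d (y + s • w)}
  have hmemΩ : ∀ s ∈ A, 0 ≤ s → y + s • w ∈ Ω := fun s hs hs0 =>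
    hΩ.mem_of_mem_closure_of_infDist_pos hs.1
      (by nlinarith [hs.2, hΩ.infDist_frontier_pos hfr hy])
  suffices Icc 0 t ⊆ A from ⟨hmemΩ t (this ⟨ht, le_rfl⟩) ht, (this ⟨ht, le_rfl⟩).2⟩
  -- continuous induction: while the segment stays in `Ω`, `d ≥ d y + c s > 0` keeps it off `∂Ω`
  have hAclosed : IsClosed A := (isClosed_closure.preimage hline).inter
    (isClosed_le (by fun_prop) ((continuous_infDist_pt _).comp hline))
  refine (hAclosed.inter isClosed_Icc).Icc_subset_of_forall_mem_nhdsWithin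
    ⟨subset_closure (by simpa using hy), by simp⟩ ?_
  rintro τ ⟨hτA, hτ0, hτt⟩
  obtain ⟨η, hη, hηΩ⟩ := Metric.eventually_nhds_iff.1 <|
    hline.continuousAt.preimage_mem_nhds (hΩ.mem_nhds (hmemΩ τ hτA hτ0))
  refine mem_of_superset (Ico_mem_nhdsGT (lt_min (lt_add_of_pos_right τ hη) hτt))
    fun σ ⟨hτσ, hσ⟩ => ?_
  obtain ⟨hση, hσt⟩ := lt_min_iff.1 hσ
  have hseg : ∀ s ∈ Icc τ σ, y + s • w ∈ Ω ∧
      HasDerivAt (fun s => d (y + s • w)) (fderiv ℝ d (y + s • w) w) s ∧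
        c ≤ fderiv ℝ d (y + s • w) w := fun s hs => by
    have hsΩ : y + s • w ∈ Ω := hηΩ <| by
      rw [Real.dist_eq, abs_lt]
      constructor <;> linarith [hs.1, hs.2]
    have hst : s ∈ Icc 0 t := ⟨hτ0.trans hs.1, hs.2.trans hσt.le⟩
    have hl : HasDerivAt (fun s : ℝ => y + s • w) w s := by
      simpa using ((hasDerivAt_id s).smul_const w).const_add y
    refine ⟨hsΩ, ?_, (hgrowth s hst hsΩ).2⟩
    exact (hgrowth s hst hsΩ).1.hasFDerivAt.comp_hasDerivAt s hl
  have hmvt := (convex_Icc τ σ).mul_sub_le_image_sub_of_le_deriv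
    (fun s hs => (hseg s hs).2.1.continuousAt.continuousWithinAt)
    (fun s hs => (hseg s (interior_subset hs)).2.1.differentiableAt.differentiableWithinAt)
    (fun s hs => ((hseg s (interior_subset hs)).2.1.deriv).symm ▸ (hseg s (interior_subset hs)).2.2)
    τ ⟨le_rfl, hτσ⟩ σ ⟨hτσ, le_rfl⟩ hτσ
  exact ⟨subset_closure (hseg σ ⟨hτσ, le_rfl⟩).1, by nlinarith [hτA.2]⟩

theorem IsOpen.add_smul_mem_of_mem_closure (hΩ : IsOpen Ω) {ν : E → E} {ε t c : ℝ}
    (hc : 0 < c) (hν : ContinuousOn ν (closure (Ω ∩ {x | infDist x (frontier Ω) < ε})))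
    (hflow : ∀ y ∈ Ω, infDist y (frontier Ω) < ε →
      y + t • ν y ∈ Ω ∧ infDist y (frontier Ω) + c ≤ infDist (y + t • ν y) (frontier Ω))
    {x : E} (hx : x ∈ closure Ω) (hxε : infDist x (frontier Ω) < ε) : x + t • ν x ∈ Ω := by
  have hxA : x ∈ closure (Ω ∩ {x | infDist x (frontier Ω) < ε}) := by
    rw [inter_comm]
    exact (isOpen_lt (continuous_infDist_pt _) continuous_const).inter_closure ⟨hxε, hx⟩
  have hF : ContinuousOn (fun y => y + t • ν y)
      (closure (Ω ∩ {x | infDist x (frontier Ω) < ε})) :=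
    continuousOn_id.add (hν.const_smul t)
  have hFx : x + t • ν x ∈ closure Ω :=
    closure_mono (image_subset_iff.2 fun y hy => (hflow y hy.1 hy.2).1)
      (hF.image_closure ⟨x, hxA, rfl⟩)
  have hle : infDist x (frontier Ω) + c ≤ infDist (x + t • ν x) (frontier Ω) :=
    le_on_closure (fun y hy => (hflow y hy.1 hy.2).2)
      ((continuous_infDist_pt _).continuousOn.add continuousOn_const)
      ((continuous_infDist_pt _).comp_continuousOn hF) hxA
  exact hΩ.mem_of_mem_closure_of_infDist_pos hFx
    (by linarith [infDist_nonneg (x := x) (s := frontier Ω)])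

theorem norm_fderiv_infDist_eq_one [ProperSpace E] {s : Set E} (hs : IsClosed s)
    (hne : s.Nonempty) {x : E} (hx : x ∉ s) (hdiff : DifferentiableAt ℝ (infDist · s) x) :
    ‖fderiv ℝ (infDist · s) x‖ = 1 := by
  set d : E → ℝ := (infDist · s)
  refine le_antisymm
    (by simpa using hdiff.hasFDerivAt.le_of_lipschitz (lipschitz_infDist_pt s)) ?_
  obtain ⟨p, hps, hp⟩ := hs.exists_infDist_eq_dist hne x
  have hD : 0 < d x := (hs.notMem_iff_infDist_pos hne).1 hx
  set u : E := (d x)⁻¹ • (p - x)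
  have hu : ‖u‖ = 1 := by
    rw [norm_smul, norm_inv, ← dist_eq_norm', ← hp, Real.norm_of_nonneg hD.le,
      inv_mul_cancel₀ hD.ne']
  -- towards a nearest point `p`, the distance decreases at unit speed
  have hseg : ∀ σ ∈ Icc 0 (d x), d (x + σ • u) = d x - σ := by
    intro σ hσ
    refine le_antisymm ?_ ?_
    · calc d (x + σ • u) ≤ dist (x + σ • u) p := infDist_le_dist_of_mem hps
        _ = d x - σ := by
          have : p = x + d x • u := by simp [u, smul_smul, hD.ne']
          rw [this, dist_add_left, dist_eq_norm, ← sub_smul, norm_smul, hu, mul_one,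
            Real.norm_of_nonpos (by linarith [hσ.2])]
          ring
    · have := infDist_le_infDist_add_dist (s := s) (x := x) (y := x + σ • u)
      rw [dist_self_add_right, norm_smul, hu, mul_one, Real.norm_of_nonneg hσ.1] at this
      linarith
  have hl : HasDerivAt (fun σ : ℝ => x + σ • u) u 0 := by
    simpa using ((hasDerivAt_id (0 : ℝ)).smul_const u).const_add x
  have hf : HasFDerivAt d (fderiv ℝ d x) (x + (0 : ℝ) • u) := by simpa using hdiff.hasFDerivAt
  have h1 : HasDerivWithinAt (fun σ => d (x + σ • u)) (fderiv ℝ d x u) (Icc 0 (d x)) 0 := by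
    have := HasFDerivAt.comp_hasDerivAt (0 : ℝ) hf hl
    exact this.hasDerivWithinAt
  have h2 : HasDerivWithinAt (fun σ => d (x + σ • u)) (-1) (Icc 0 (d x)) 0 :=
    ((hasDerivAt_id (0 : ℝ)).const_sub (d x)).hasDerivWithinAt.congr hseg
      (hseg 0 ⟨le_rfl, hD.le⟩)
  have heq : fderiv ℝ d x u = -1 :=
    (uniqueDiffOn_Icc hD 0 ⟨le_rfl, hD.le⟩).eq_deriv _ h1 h2
  simpa [heq, hu] using (fderiv ℝ d x).le_opNorm u

theorem IsOpen.differentiableAt_infDist_frontier (hΩ : IsOpen Ω)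
    (hd : ContDiffOn ℝ 2 (infDist · (frontier Ω)) (boundaryStrip Ω ρ)) {y : E} (hy : y ∈ Ω)
    (hyρ : infDist y (frontier Ω) < ρ) : DifferentiableAt ℝ (infDist · (frontier Ω)) y :=
  (hd.contDiffAt (mem_interior_iff_mem_nhds.1
    (hΩ.mem_interior_boundaryStrip hy hyρ))).differentiableAt (by norm_num)

theorem contDiffOn_closure_smoothTransition_smul {ρ : ℝ} {ν : E → E} {ε : ℝ} (hε : 0 < ε)
    (hερ : ε < ρ) (hνC : ContDiffOn ℝ 1 ν (boundaryStrip Ω ρ))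
    (hd : ContDiffOn ℝ 2 (infDist · (frontier Ω)) (boundaryStrip Ω ρ)) :
    ContDiffOn ℝ 1
      (fun x => (ε * (1 - infDist x (frontier Ω) / ε).smoothTransition) • ν x) (closure Ω) := by
  refine contDiffOn_of_locally_contDiffOn fun x hx => ?_
  rcases lt_or_ge (infDist x (frontier Ω)) ρ with hxρ | hxρ
  · exact ⟨{y | infDist y (frontier Ω) < ρ}, isOpen_lt (continuous_infDist_pt _) continuous_const,
      hxρ, (contDiffOn_const.mul (Real.smoothTransition.contDiff.comp_contDiffOn
        (contDiffOn_const.sub ((hd.of_le (by norm_num)).div_const ε)))).smul hνC⟩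
  refine ⟨{y | ε < infDist y (frontier Ω)}, isOpen_lt continuous_const (continuous_infDist_pt _),
    hερ.trans_le hxρ, (contDiffOn_const (c := (0 : E))).congr fun y hy => ?_⟩
  rw [Real.smoothTransition.zero_of_nonpos
    (by rw [sub_nonpos, le_div_iff₀ hε, one_mul]; exact hy.2.le), mul_zero, zero_smul]

end NormedSpace

section DerivativeExtension

variable {E F : Type*} [NormedAddCommGroup E] [NormedSpace ℝ E] [NormedAddCommGroup F]
  [NormedSpace ℝ F] {f : E → F} {s : Set E}

theorem ContDiffOn.limUnder_nhdsWithin_interior_fderiv_eq {n : WithTop ℕ∞}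
    (hf : ContDiffOn ℝ n f s) (hn : 1 ≤ n) {x : E} (hx : x ∈ interior s) :
    limUnder (𝓝[interior s] x) (fderiv ℝ f) = fderiv ℝ f x :=
  have : (𝓝[interior s] x).NeBot := mem_closure_iff_nhdsWithin_neBot.1 (subset_closure hx)
  (((hf.mono interior_subset).continuousOn_fderiv_of_isOpen isOpen_interior hn) x hx).limUnder_eq

/-- Unlike `fderivWithin`, the limit of the interior derivative needs no unique
differentiability of `s` at its boundary. -/
theorem ContDiffOn.contDiffOn_limUnder_fderiv {n : ℕ} (hf : ContDiffOn ℝ (n + 1) f s)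
    (hs : s ⊆ closure (interior s)) :
    ContDiffOn ℝ n (fun x => limUnder (𝓝[interior s] x) (fderiv ℝ f)) s := by
  intro x₀ hx₀
  obtain ⟨u, hu, -, f', hf'u, hf'C⟩ :=
    (contDiffWithinAt_succ_iff_hasFDerivWithinAt (by simp)).1 (hf x₀ hx₀)
  rw [insert_eq_of_mem hx₀] at hu
  obtain ⟨V, hVo, hx₀V, hf'V⟩ := hf'C.contDiffOn' le_rfl (by simp)
  obtain ⟨W, hWo, hx₀W, hWu⟩ := mem_nhdsWithin.1 hu
  have hsu : s ∩ (V ∩ W) ⊆ insert x₀ u ∩ V := fun y ⟨hys, hyV, hyW⟩ =>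
    ⟨subset_insert _ _ (hWu ⟨hyW, hys⟩), hyV⟩
  have hfderiv : EqOn (fderiv ℝ f) f' (interior s ∩ (V ∩ W)) := fun z ⟨hzs, _, hzW⟩ =>
    ((hf'u z (hWu ⟨hzW, interior_subset hzs⟩)).hasFDerivAt (mem_of_superset
      ((isOpen_interior.inter hWo).mem_nhds ⟨hzs, hzW⟩)
      fun a ⟨has, haW⟩ => hWu ⟨haW, interior_subset has⟩)).fderiv
  have hlim : EqOn (fun x => limUnder (𝓝[interior s] x) (fderiv ℝ f)) f' (s ∩ (V ∩ W)) := by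
    intro y hy
    have : (𝓝[interior s] y).NeBot := mem_closure_iff_nhdsWithin_neBot.1 (hs hy.1)
    have hcont : ContinuousWithinAt f' (interior s ∩ (V ∩ W)) y :=
      (hf'V.continuousOn y (hsu hy)).mono
        ((inter_subset_inter_left _ interior_subset).trans hsu)
    refine Tendsto.limUnder_eq ?_
    rw [nhdsWithin_restrict' _ ((hVo.inter hWo).mem_nhds hy.2)]
    exact hcont.tendsto.congr' (eventuallyEq_nhdsWithin_of_eqOn hfderiv.symm)
  exact (contDiffWithinAt_inter ((hVo.inter hWo).mem_nhds ⟨hx₀V, hx₀W⟩)).1 <|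
    ((hf'V x₀ (hsu ⟨hx₀, hx₀V, hx₀W⟩)).mono hsu).congr hlim (hlim ⟨hx₀, hx₀V, hx₀W⟩)

end DerivativeExtension

section InnerProductSpace

variable {E : Type*} [NormedAddCommGroup E] [InnerProductSpace ℝ E] [ProperSpace E] {Ω : Set E}
  {ρ : ℝ}

theorem IsOpen.norm_gradient_infDist_frontier (hΩ : IsOpen Ω) (hfr : (frontier Ω).Nonempty)
    (hd : ContDiffOn ℝ 2 (infDist · (frontier Ω)) (boundaryStrip Ω ρ)) {y : E} (hy : y ∈ Ω)
    (hyρ : infDist y (frontier Ω) < ρ) : ‖∇ (infDist · (frontier Ω)) y‖ = 1 := by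
  rw [gradient, LinearIsometryEquiv.norm_map]
  exact norm_fderiv_infDist_eq_one isClosed_frontier hfr (hΩ.notMem_frontier hy)
    (hΩ.differentiableAt_infDist_frontier hd hy hyρ)

theorem gradient_infDist_frontier_add_right {z : E} (hz : ∀ x, x + z ∈ Ω ↔ x ∈ Ω) (x : E) :
    ∇ (infDist · (frontier Ω)) (x + z) = ∇ (infDist · (frontier Ω)) x := by
  have h : (fun y => infDist (y + z) (frontier Ω)) = (infDist · (frontier Ω)) :=
    funext (infDist_add_right_of_forall_add_mem_iff (add_mem_frontier_iff_of_forall_add_mem_iff hz))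
  rw [gradient, gradient, ← fderiv_comp_add_right, h]

theorem IsOpen.exists_contDiffOn_eq_gradient_infDist (hΩ : IsOpen Ω)
    (hd : ContDiffOn ℝ 2 (infDist · (frontier Ω)) (boundaryStrip Ω ρ)) :
    ∃ ν : E → E, ContDiffOn ℝ 1 ν (boundaryStrip Ω ρ) ∧
      ∀ y ∈ Ω, infDist y (frontier Ω) < ρ → ν y = ∇ (infDist · (frontier Ω)) y := by
  have hd' : ContDiffOn ℝ ((1 : ℕ) + 1) (infDist · (frontier Ω)) (boundaryStrip Ω ρ) := by
    rwa [Nat.cast_one, one_add_one_eq_two]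
  refine ⟨fun x => (InnerProductSpace.toDual ℝ E).symm
      (limUnder (𝓝[interior (boundaryStrip Ω ρ)] x) (fderiv ℝ (infDist · (frontier Ω)))),
    (InnerProductSpace.toDual ℝ E).symm.contDiff.comp_contDiffOn
      (hd'.contDiffOn_limUnder_fderiv hΩ.boundaryStrip_subset_closure_interior),
    fun y hy hyρ => ?_⟩
  dsimp only
  rw [hd.limUnder_nhdsWithin_interior_fderiv_eq (by norm_num)
    (hΩ.mem_interior_boundaryStrip hy hyρ), gradient]

/-- Near `x₀` the gradient of `d` stays within `1/4` of the limit `ν x₀`, so the derivative of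
`d` in the direction of the gradient at a nearby point is at least `1/2`. -/
theorem IsOpen.exists_radius_add_smul_gradient_infDist_mem (hΩ : IsOpen Ω)
    (hfr : (frontier Ω).Nonempty) (hρ : 0 < ρ)
    (hd : ContDiffOn ℝ 2 (infDist · (frontier Ω)) (boundaryStrip Ω ρ)) {x₀ : E}
    (hx₀ : x₀ ∈ frontier Ω) :
    ∃ r > 0, ∀ y ∈ Ω, dist y x₀ < r → ∀ t ∈ Icc 0 r,
      y + t • ∇ (infDist · (frontier Ω)) y ∈ Ω ∧
      infDist y (frontier Ω) + 2⁻¹ * t ≤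
        infDist (y + t • ∇ (infDist · (frontier Ω)) y) (frontier Ω) := by
  set d : E → ℝ := (infDist · (frontier Ω))
  obtain ⟨ν, hνC, hν⟩ := hΩ.exists_contDiffOn_eq_gradient_infDist hd
  have hx₀S : x₀ ∈ boundaryStrip Ω ρ :=
    ⟨frontier_subset_closure hx₀, by rwa [infDist_zero_of_mem hx₀]⟩
  obtain ⟨r₀, hr₀, hosc⟩ := Metric.continuousWithinAt_iff.1
    (hνC.continuousOn x₀ hx₀S) (1 / 4) (by norm_num)
  have hnear : ∀ z ∈ Ω, dist z x₀ < r₀ → d z < ρ → dist (∇ d z) (ν x₀) < 1 / 4 :=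
    fun z hz hzx hzρ => hν z hz hzρ ▸ hosc ⟨subset_closure hz, hzρ⟩ hzx
  refine ⟨min (r₀ / 2) (ρ / 2), by positivity, fun y hy hyx t ht => ?_⟩
  have hyρ : d y < ρ := by
    linarith [infDist_le_dist_of_mem (x := y) hx₀, min_le_right (r₀ / 2) (ρ / 2)]
  have hw := hΩ.norm_gradient_infDist_frontier hfr hd hy hyρ
  set w := ∇ d y
  refine hΩ.add_smul_mem_of_le_fderiv_infDist hfr hy (by norm_num) ht.1 fun s hs hzΩ => ?_
  have hzy : dist (y + s • w) y ≤ min (r₀ / 2) (ρ / 2) := by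
    rw [dist_self_add_left, norm_smul, hw, mul_one, Real.norm_of_nonneg hs.1]
    exact hs.2.trans ht.2
  have hzx : dist (y + s • w) x₀ < r₀ := by
    linarith [dist_triangle (y + s • w) y x₀, min_le_left (r₀ / 2) (ρ / 2)]
  have hzρ : d (y + s • w) < ρ := by
    linarith [infDist_le_dist_of_mem (x := y + s • w) hx₀, dist_triangle (y + s • w) y x₀,
      min_le_right (r₀ / 2) (ρ / 2)]
  refine ⟨hΩ.differentiableAt_infDist_frontier hd hzΩ hzρ, ?_⟩
  have hclose : ‖∇ d (y + s • w) - w‖ < 1 / 2 := by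
    rw [← dist_eq_norm]
    linarith [dist_triangle_right (∇ d (y + s • w)) w (ν x₀), hnear _ hzΩ hzx hzρ,
      hnear y hy (by linarith [min_le_left (r₀ / 2) (ρ / 2)]) hyρ]
  calc (2⁻¹ : ℝ) ≤ ⟪w, w⟫ + ⟪∇ d (y + s • w) - w, w⟫ := by
        rw [real_inner_self_eq_norm_sq, hw]
        linarith [neg_abs_le ⟪∇ d (y + s • w) - w, w⟫,
          (abs_real_inner_le_norm (∇ d (y + s • w) - w) w).trans_eq (by rw [hw, mul_one])]
    _ = fderiv ℝ d (y + s • w) w := by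
        rw [← inner_add_left, add_sub_cancel, gradient, InnerProductSpace.toDual_symm_apply]

theorem IsOpen.exists_uniform_radius_add_smul_gradient_infDist_mem (hΩ : IsOpen Ω)
    (hfr : (frontier Ω).Nonempty) (hρ : 0 < ρ)
    (hd : ContDiffOn ℝ 2 (infDist · (frontier Ω)) (boundaryStrip Ω ρ)) {K : Set E}
    (hK : IsCompact K) (htrans : ∀ p, ∃ z, (∀ x, x + z ∈ Ω ↔ x ∈ Ω) ∧ p + z ∈ K) :
    ∃ ε > 0, ∀ y ∈ Ω, infDist y (frontier Ω) < ε → ∀ t ∈ Icc 0 ε,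
      y + t • ∇ (infDist · (frontier Ω)) y ∈ Ω ∧
      infDist y (frontier Ω) + 2⁻¹ * t ≤
        infDist (y + t • ∇ (infDist · (frontier Ω)) y) (frontier Ω) := by
  obtain ⟨ε, hε, hunif⟩ := (hK.inter_left isClosed_frontier).exists_pos_forall_dist_lt
    (Q := fun y t => y ∈ Ω → y + t • ∇ (infDist · (frontier Ω)) y ∈ Ω ∧
      infDist y (frontier Ω) + 2⁻¹ * t ≤
        infDist (y + t • ∇ (infDist · (frontier Ω)) y) (frontier Ω))
    fun x₀ hx₀ => by
      obtain ⟨r, hr, h⟩ := hΩ.exists_radius_add_smul_gradient_infDist_mem hfr hρ hd hx₀.1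
      exact ⟨r, hr, fun y hyx t ht hy => h y hy hyx t ht⟩
  refine ⟨ε, hε, fun y hy hyε t ht => ?_⟩
  obtain ⟨p, hp, hpy⟩ := isClosed_frontier.exists_infDist_eq_dist hfr y
  obtain ⟨z, hz, hpz⟩ := htrans p
  have hfrz := add_mem_frontier_iff_of_forall_add_mem_iff hz
  have := hunif (p + z) ⟨(hfrz p).2 hp, hpz⟩ (y + z) (by rwa [dist_add_right, ← hpy]) t ht
    ((hz y).2 hy)
  rwa [gradient_infDist_frontier_add_right hz, add_right_comm, hz,
    infDist_add_right_of_forall_add_mem_iff hfrz, infDist_add_right_of_forall_add_mem_iff hfrz]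
    at this

theorem IsOpen.exists_contDiffOn_forall_mem_closure_add_smul_mem (hΩ : IsOpen Ω)
    (hfr : (frontier Ω).Nonempty) (hρ : 0 < ρ)
    (hd : ContDiffOn ℝ 2 (infDist · (frontier Ω)) (boundaryStrip Ω ρ)) {K : Set E}
    (hK : IsCompact K) (htrans : ∀ p, ∃ z, (∀ x, x + z ∈ Ω ↔ x ∈ Ω) ∧ p + z ∈ K) :
    ∃ ε > 0, ε < ρ ∧ ∃ ν : E → E, ContDiffOn ℝ 1 ν (boundaryStrip Ω ρ) ∧
      ∀ x ∈ closure Ω, infDist x (frontier Ω) < ε → ∀ t ∈ Ioc 0 ε, x + t • ν x ∈ Ω := by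
  obtain ⟨ε, hε, hflow⟩ :=
    hΩ.exists_uniform_radius_add_smul_gradient_infDist_mem hfr hρ hd hK htrans
  obtain ⟨ν, hνC, hν⟩ := hΩ.exists_contDiffOn_eq_gradient_infDist hd
  have hερ : min ε (ρ / 2) < ρ := by linarith [min_le_right ε (ρ / 2)]
  refine ⟨min ε (ρ / 2), by positivity, hερ, ν, hνC, fun x hx hxε t ht => ?_⟩
  refine hΩ.add_smul_mem_of_mem_closure (c := 2⁻¹ * t) (by linarith [ht.1])
    (hνC.continuousOn.mono fun z hz => ⟨closure_mono inter_subset_left hz, ?_⟩)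
    (fun y hy hyε => ?_) hx hxε
  · exact (closure_lt_subset_le (continuous_infDist_pt _) continuous_const
      (closure_mono inter_subset_right hz)).trans_lt hερ
  · rw [hν y hy (hyε.trans hερ)]
    exact hflow y hy (hyε.trans_le (min_le_left _ _)) t ⟨ht.1.le, ht.2.trans (min_le_left _ _)⟩

theorem IsOpen.exists_contDiffOn_forall_add_smul_mem (hΩ : IsOpen Ω) (hρ : 0 < ρ)
    (hd : ContDiffOn ℝ 2 (infDist · (frontier Ω)) (boundaryStrip Ω ρ)) {K : Set E}
    (hK : IsCompact K) (htrans : ∀ p, ∃ z, (∀ x, x + z ∈ Ω ↔ x ∈ Ω) ∧ p + z ∈ K) :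
    ∃ ζ : E → E, ContDiffOn ℝ 1 ζ (closure Ω) ∧
      ∀ x ∈ closure Ω, ∀ δ : ℝ, 0 < δ → δ < 1 → x + δ • ζ x ∈ Ω := by
  rcases (frontier Ω).eq_empty_or_nonempty with hfr | hfr
  · exact ⟨0, contDiffOn_const, fun x hx δ _ _ => by
      simpa using hΩ.mem_of_mem_closure_of_notMem_frontier hx (hfr ▸ notMem_empty x)⟩
  obtain ⟨ε, hε, hερ, ν, hνC, hmem⟩ :=
    hΩ.exists_contDiffOn_forall_mem_closure_add_smul_mem hfr hρ hd hK htrans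
  refine ⟨_, contDiffOn_closure_smoothTransition_smul hε hερ hνC hd,
    fun x hx δ hδ hδ1 => ?_⟩
  rcases lt_or_ge (infDist x (frontier Ω)) ε with hxε | hxε
  · have hφ : 0 < (1 - infDist x (frontier Ω) / ε).smoothTransition :=
      Real.smoothTransition.pos_of_pos (by rwa [sub_pos, div_lt_one hε])
    rw [smul_smul]
    refine hmem x hx hxε _ ⟨by positivity, ?_⟩
    calc δ * (ε * (1 - infDist x (frontier Ω) / ε).smoothTransition) ≤ 1 * (ε * 1) := by
          gcongr
          exact Real.smoothTransition.le_one _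
      _ = ε := by ring
  · rw [Real.smoothTransition.zero_of_nonpos (by rwa [sub_nonpos, le_div_iff₀ hε, one_mul]),
      mul_zero, zero_smul, smul_zero, add_zero]
    exact hΩ.mem_of_mem_closure_of_infDist_pos hx (hε.trans_le hxε)

end InnerProductSpace

theorem stmt_16 (n : ℕ) (Ω : Set (EuclideanSpace ℝ (Fin n)))
    (hopen : IsOpen Ω)
    (hper : ∀ z : EuclideanSpace ℝ (Fin n), (∀ i, ∃ k : ℤ, z i = (k : ℝ)) →
      ∀ x, x ∈ Ω → x + z ∈ Ω)
    (ρ : ℝ) (hρ : 0 < ρ)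
    (hd : ContDiffOn ℝ 2 (fun x => Metric.infDist x (frontier Ω))
      {x | x ∈ closure Ω ∧ Metric.infDist x (frontier Ω) < ρ}) :
    ∃ ζ : EuclideanSpace ℝ (Fin n) → EuclideanSpace ℝ (Fin n),
      ContDiffOn ℝ 1 ζ (closure Ω) ∧
      ∀ x ∈ closure Ω, ∀ δ : ℝ, 0 < δ → δ < 1 → x + δ • ζ x ∈ Ω := by
  have hint : ∀ z : EuclideanSpace ℝ (Fin n), (∀ i, ∃ k : ℤ, z i = k) →
      ∀ x, x + z ∈ Ω ↔ x ∈ Ω := fun z hz x =>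
    ⟨fun h => by simpa using hper (-z) (fun i => (hz i).elim fun k hk => ⟨-k, by simp [hk]⟩) _ h,
      hper z hz x⟩
  have hcube : IsCompact (WithLp.toLp 2 '' univ.pi fun _ : Fin n => Icc (0 : ℝ) 1) :=
    (isCompact_univ_pi fun _ => isCompact_Icc).image (PiLp.continuous_toLp 2 _)
  refine hopen.exists_contDiffOn_forall_add_smul_mem hρ hd hcube fun p =>
    ⟨WithLp.toLp 2 fun i => -(⌊p i⌋ : ℝ), hint _ fun i => ⟨-⌊p i⌋, by simp⟩,
      fun i => Int.fract (p i), fun i _ => ⟨Int.fract_nonneg _, (Int.fract_lt_one _).le⟩, ?_⟩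
  ext i
  simp [Int.fract, sub_eq_add_neg]
end
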